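/- For every positive integer n and all complex numbers s_0, …, s_{n−1}, there exists f ∈ ℂ with |f| = 1 such that |s_i^n − f^n| ≥ 1/(2n) for all i = 0, …, n−1. -/

import Mathlib

/-!
The `n + 1`-st roots of unity are pairwise at distance at least `4 / (n + 1) ≥ 1 / n` (Jordan's
inequality `sin x ≥ 2x/π`), so an open disc of radius `1 / (2n)` contains at most one of them.
The `n` points `s_i ^ n` therefore leave some root of unity `ζ` at distance at least `1 / (2n)`
from all of them, and any `n`-th root `f` of `ζ` lies on the unit circle.
-/

open Real Complex

theorem exists_forall_le_dist_of_card_lt {α ι κ : Type*} [PseudoMetricSpace α] [Fintype ι]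
    [Fintype κ] {p : ι → α} {r : ℝ} (hp : Pairwise fun k l => 2 * r ≤ dist (p k) (p l))
    (q : κ → α) (hcard : Fintype.card κ < Fintype.card ι) :
    ∃ k, ∀ j, r ≤ dist (q j) (p k) := by
  by_contra! hclose
  choose g hg using hclose
  have hg_inj : Function.Injective g := by
    intro k l hkl
    by_contra hne
    have := dist_triangle_left (p k) (p l) (q (g k))
    linarith [hp hne, hg k, hkl ▸ hg l]
  exact hcard.not_ge (Fintype.card_le_of_injective g hg_inj)

theorem Real.two_mul_min_le_sin_pi_mul {t : ℝ} (h₀ : 0 ≤ t) (h₁ : t ≤ 1) :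
    2 * min t (1 - t) ≤ sin (π * t) := by
  have jordan : ∀ u, 0 ≤ u → u ≤ 1 / 2 → 2 * u ≤ sin (π * u) := fun u hu₀ hu₁ => by
    have := mul_le_sin (x := π * u) (by positivity) (by nlinarith [pi_pos])
    rwa [← mul_assoc, div_mul_cancel₀ _ pi_ne_zero] at this
  rcases le_total t (1 / 2) with ht | ht
  · exact (mul_le_mul_of_nonneg_left (min_le_left _ _) two_pos.le).trans (jordan t h₀ ht)
  · calc 2 * min t (1 - t) ≤ 2 * (1 - t) := by gcongr; exact min_le_right _ _
      _ ≤ sin (π * (1 - t)) := jordan _ (by linarith) (by linarith)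
      _ = sin (π * t) := by rw [mul_one_sub, sin_pi_sub]

theorem Complex.norm_exp_mul_I_sub_exp_mul_I (x y : ℝ) :
    ‖exp (x * I) - exp (y * I)‖ = 2 * |Real.sin ((x - y) / 2)| := by
  have : exp (x * I) - exp (y * I) = exp (y * I) * (exp (I * ↑(x - y)) - 1) := by
    rw [mul_sub, mul_one, ← exp_add]; push_cast; ring_nf
  rw [this, norm_mul, norm_exp_ofReal_mul_I, one_mul, norm_exp_I_mul_ofReal_sub_one, norm_mul,
    Real.norm_eq_abs, Real.norm_eq_abs, abs_two]

theorem Complex.four_div_le_norm_exp_sub_exp {m a b : ℕ} (hab : a < b) (hb : b < m) :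
    4 / m ≤ ‖exp (↑(2 * π * b / m) * I) - exp (↑(2 * π * a / m) * I)‖ := by
  have hab' : (a : ℝ) + 1 ≤ b := by exact_mod_cast hab
  have hbm : (b : ℝ) + 1 ≤ m := by exact_mod_cast hb
  have hm : (0 : ℝ) < m := by linarith [a.cast_nonneg (α := ℝ)]
  set t : ℝ := (b - a) / m
  have ht : 1 / (m : ℝ) ≤ min t (1 - t) := by
    refine le_min (div_le_div_of_nonneg_right (by linarith) hm.le) ?_
    rw [one_sub_div hm.ne']
    exact div_le_div_of_nonneg_right (by linarith [a.cast_nonneg (α := ℝ)]) hm.le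
  have hsin : 2 / (m : ℝ) ≤ Real.sin (π * t) := by
    have hm_inv := one_div_pos.2 hm
    calc 2 / (m : ℝ) = 2 * (1 / m) := by ring
      _ ≤ 2 * min t (1 - t) := by gcongr
      _ ≤ Real.sin (π * t) :=
        Real.two_mul_min_le_sin_pi_mul (by linarith [min_le_left t (1 - t)])
          (by linarith [min_le_right t (1 - t)])
  have harg : (2 * π * b / m - 2 * π * a / m) / 2 = π * t := by ring
  rw [norm_exp_mul_I_sub_exp_mul_I, harg]
  calc 4 / (m : ℝ) = 2 * (2 / m) := by ring
    _ ≤ 2 * |Real.sin (π * t)| := by gcongr; exact hsin.trans (le_abs_self _)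

theorem Complex.pairwise_four_div_le_dist_exp (m : ℕ) :
    Pairwise fun k l : Fin m =>
      4 / m ≤ dist (exp (↑(2 * π * k / m) * I)) (exp (↑(2 * π * l / m) * I)) := by
  intro k l hkl
  rw [dist_eq_norm]
  rcases lt_or_gt_of_ne (Fin.val_ne_of_ne hkl) with h | h
  · rw [norm_sub_rev]; exact four_div_le_norm_exp_sub_exp h l.isLt
  · exact four_div_le_norm_exp_sub_exp h k.isLt

/-- The claim proven inside Theorem 8.1 of the paper: for every `n ≥ 1` and all
complex `s_0, …, s_{n-1}` there is a point `f` on the unit circle with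
`|s_i^n - f^n| ≥ 1/(2n)` for all `i`. -/
theorem exists_unit_f_far_from_powers (n : ℕ) (hn : 1 ≤ n) (s : Fin n → ℂ) :
    ∃ f : ℂ, ‖f‖ = 1 ∧
      ∀ i, 1 / (2 * (n : ℝ)) ≤ ‖s i ^ n - f ^ n‖ := by
  have hn' : (1 : ℝ) ≤ n := by exact_mod_cast hn
  have hsep : Pairwise fun k l : Fin (n + 1) => 2 * (1 / (2 * (n : ℝ))) ≤
      dist (exp (↑(2 * π * k / ↑(n + 1)) * I)) (exp (↑(2 * π * l / ↑(n + 1)) * I)) := by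
    refine (pairwise_four_div_le_dist_exp (n + 1)).mono fun k l h => le_trans ?_ h
    rw [mul_one_div, div_le_div_iff₀ (by positivity) (by positivity)]
    push_cast; linarith
  obtain ⟨k, hk⟩ := exists_forall_le_dist_of_card_lt hsep (fun i => s i ^ n) (by simp)
  refine ⟨exp (↑(2 * π * k / ↑(n + 1) / n) * I), norm_exp_ofReal_mul_I _, fun i => ?_⟩
  have hpow : exp (↑(2 * π * k / ↑(n + 1) / n) * I) ^ n = exp (↑(2 * π * k / ↑(n + 1)) * I) := by
    have hn0 : (n : ℂ) ≠ 0 := by exact_mod_cast (by omega : n ≠ 0)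
    rw [← Complex.exp_nat_mul]; congr 1; push_cast
    field_simp
  rw [hpow, ← dist_eq_norm]
  exact hk i
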